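/- arXiv:1804.10457 — 2 statements merged into one kernel-verified Lean document; each statement's English description precedes it below -/
import Mathlib

section
/- Let P₁,…,Pₙ be pairwise distinct pure states on ℂ^d with n ≥ 2, and suppose there exist positive real numbers t₁,…,tₙ and an orthogonal projection R with ∑_{j=1}^n t_j P_j = R. Then P₁,…,Pₙ are antidistinguishable. -/
open Matrix BigOperators
open scoped ComplexOrder

/-- A state (density matrix) on ℂ^d: positive semidefinite (hence Hermitian) with trace 1. -/
def IsState {d : ℕ} (ρ : Matrix (Fin d) (Fin d) ℂ) : Prop :=
  ρ.PosSemidef ∧ ρ.trace = 1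

/-- A POVM with outcomes 1,…,n. -/
def IsPOVM {d n : ℕ} (M : Fin n → Matrix (Fin d) (Fin d) ℂ) : Prop :=
  (∀ j, (M j).PosSemidef) ∧ ∑ j, M j = 1

/-- States are distinguishable if some POVM identifies each with certainty. -/
def Distinguishable {d n : ℕ} (ρ : Fin n → Matrix (Fin d) (Fin d) ℂ) : Prop :=
  ∃ M : Fin n → Matrix (Fin d) (Fin d) ℂ, IsPOVM M ∧ ∀ j, (ρ j * M j).trace = 1

/-- States are antidistinguishable if some POVM excludes each with certainty,
with every outcome occurring for at least one state. -/
def Antidistinguishable {d n : ℕ} (ρ : Fin n → Matrix (Fin d) (Fin d) ℂ) : Prop :=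
  ∃ M : Fin n → Matrix (Fin d) (Fin d) ℂ, IsPOVM M ∧
    ∀ j, (ρ j * M j).trace = 0 ∧ ∑ k, (ρ k * M j).trace ≠ 0

/-- A pure state on ℂ^d: a rank-one orthogonal projection. -/
def IsPureState {d : ℕ} (P : Matrix (Fin d) (Fin d) ℂ) : Prop :=
  P.IsHermitian ∧ P * P = P ∧ P.trace = 1

/-!
Write `Q = 1 - R`. Compressing `∑ tⱼ Pⱼ = R` by `Q` gives `∑ tⱼ (PⱼQ)ᴴ(PⱼQ) = 0`, so every
`Pⱼ` lives inside `R`, and each `R - Pⱼ` is again a projection, of trace `s - 1` where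
`s = ∑ tⱼ`. Since two of the `Pⱼ` differ, some `R - Pⱼ` is nonzero, so `s > 1`. The measurement
`Mⱼ = tⱼ/(s-1) • (R - Pⱼ) + tⱼ/s • (1 - R)` then sums to `R + (1 - R) = 1`, annihilates `Pⱼ`,
and `∑ₖ tₖ tr(Pₖ Mⱼ) = tr(R Mⱼ) = tⱼ ≠ 0`, so some state triggers outcome `j`.
-/

open scoped MatrixOrder

section

variable {m ι 𝕜 : Type*} [Fintype ι] [RCLike 𝕜]

theorem IsStarProjection.trace_mul_nonneg [Fintype m] {P M : Matrix m m 𝕜}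
    (hP : IsStarProjection P) (hM : M.PosSemidef) : 0 ≤ (P * M).trace := by
  calc (0 : 𝕜) ≤ (Pᴴ * M * P).trace := (hM.conjTranspose_mul_mul_same P).trace_nonneg
    _ = (P * M).trace := by
      rw [← star_eq_conjTranspose, hP.isSelfAdjoint.star_eq, trace_mul_cycle,
        hP.isIdempotentElem.eq]

theorem trace_eq_sum_of_sum_smul_eq [Fintype m] {P : ι → Matrix m m 𝕜} {t : ι → ℝ}
    {R : Matrix m m 𝕜} (htr : ∀ i, (P i).trace = 1) (hsum : ∑ i, t i • P i = R) :
    R.trace = ((∑ i, t i : ℝ) : 𝕜) := by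
  simp [← hsum, trace_sum, trace_smul, htr, RCLike.real_smul_eq_coe_mul]

variable [DecidableEq m] {P : ι → Matrix m m 𝕜} {t : ι → ℝ} {R : Matrix m m 𝕜}

noncomputable def exclusionPOVM (P : ι → Matrix m m 𝕜) (t : ι → ℝ) (R : Matrix m m 𝕜) (j : ι) :
    Matrix m m 𝕜 :=
  (t j / (∑ k, t k - 1)) • (R - P j) + (t j / ∑ k, t k) • (1 - R)

theorem sum_exclusionPOVM (hsum : ∑ i, t i • P i = R) (hs : 1 < ∑ k, t k) :
    ∑ j, exclusionPOVM P t R j = 1 := by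
  unfold exclusionPOVM
  set s := ∑ k, t k
  have hsumR : ∑ j, (t j / (s - 1)) • (R - P j) = R := by
    simp_rw [div_eq_inv_mul, mul_smul, ← Finset.smul_sum, smul_sub, Finset.sum_sub_distrib,
      ← Finset.sum_smul, hsum]
    rw [show s • R - R = (s - 1) • R by rw [sub_smul, one_smul]]
    exact inv_smul_smul₀ (by linarith) R
  have hsumQ : ∑ j, (t j / s) • (1 - R) = 1 - R := by
    rw [← Finset.sum_smul, ← Finset.sum_div, div_self (by linarith), one_smul]
  rw [Finset.sum_add_distrib, hsumR, hsumQ, add_sub_cancel]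

variable [Fintype m]

theorem mul_eq_self_of_sum_smul_eq (hP : ∀ i, IsStarProjection (P i)) (ht : ∀ i, 0 < t i)
    (hR : IsStarProjection R) (hsum : ∑ i, t i • P i = R) (i : ι) : P i * R = P i := by
  have hQ : (1 - R)ᴴ = 1 - R := hR.one_sub.isSelfAdjoint.star_eq
  have hPk : ∀ k, (P k * (1 - R))ᴴ * (P k * (1 - R)) = (1 - R) * P k * (1 - R) := fun k => by
    rw [conjTranspose_mul, hQ, ← star_eq_conjTranspose, (hP k).isSelfAdjoint.star_eq,
      mul_assoc, ← mul_assoc (P k), (hP k).isIdempotentElem.eq, mul_assoc]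
  have hzero : ∑ k, t k • ((P k * (1 - R))ᴴ * (P k * (1 - R))) = 0 := by
    calc ∑ k, t k • ((P k * (1 - R))ᴴ * (P k * (1 - R)))
        = (1 - R) * (∑ k, t k • P k) * (1 - R) := by
          simp only [hPk, Finset.mul_sum, Finset.sum_mul, mul_smul_comm, smul_mul_assoc]
      _ = 0 := by rw [hsum, hR.one_sub_mul_self, zero_mul]
  have hi := (Finset.sum_eq_zero_iff_of_nonneg fun k _ =>
    smul_nonneg (ht k).le (posSemidef_conjTranspose_mul_self _).nonneg).mp hzero i
    (Finset.mem_univ i)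
  rw [smul_eq_zero, conjTranspose_mul_self_eq_zero] at hi
  simpa [mul_sub, sub_eq_zero, eq_comm] using hi.resolve_left (ht i).ne'

theorem one_lt_sum_of_sum_smul_eq (hP : ∀ i, IsStarProjection (P i)) (ht : ∀ i, 0 < t i)
    (htr : ∀ i, (P i).trace = 1) (hR : IsStarProjection R) (hsum : ∑ i, t i • P i = R)
    {i j : ι} (hij : P i ≠ P j) : 1 < ∑ k, t k := by
  obtain ⟨k, hk⟩ : ∃ k, R ≠ P k := by
    by_contra! h
    exact hij ((h i).symm.trans (h j))
  have hpsd : (R - P k).PosSemidef :=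
    ((hP k).sub_of_mul_eq_left hR (mul_eq_self_of_sum_smul_eq hP ht hR hsum k)).nonneg.posSemidef
  have hpos : (0 : 𝕜) < (R - P k).trace :=
    hpsd.trace_nonneg.lt_of_ne' (by rwa [ne_eq, hpsd.trace_eq_zero_iff, sub_eq_zero])
  rw [trace_sub, trace_eq_sum_of_sum_smul_eq htr hsum, htr k, ← RCLike.ofReal_one,
    ← RCLike.ofReal_sub, RCLike.ofReal_pos] at hpos
  linarith

theorem posSemidef_exclusionPOVM (hP : ∀ i, IsStarProjection (P i)) (ht : ∀ i, 0 < t i)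
    (hR : IsStarProjection R) (hPR : ∀ i, P i * R = P i) (hs : 1 < ∑ k, t k) (j : ι) :
    (exclusionPOVM P t R j).PosSemidef :=
  .add (((hP j).sub_of_mul_eq_left hR (hPR j)).nonneg.posSemidef.smul
      (div_nonneg (ht j).le (by linarith)))
    (hR.one_sub.nonneg.posSemidef.smul (div_nonneg (ht j).le (by linarith)))

theorem mul_exclusionPOVM_self (hP : ∀ i, IsStarProjection (P i)) (hPR : ∀ i, P i * R = P i)
    (j : ι) : P j * exclusionPOVM P t R j = 0 := by
  simp [exclusionPOVM, mul_add, mul_sub, hPR, (hP j).isIdempotentElem.eq]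

theorem trace_mul_exclusionPOVM (htr : ∀ i, (P i).trace = 1) (hR : IsStarProjection R)
    (hsum : ∑ i, t i • P i = R) (hPR : ∀ i, P i * R = P i) (hs : 1 < ∑ k, t k) (j : ι) :
    (R * exclusionPOVM P t R j).trace = t j := by
  have hMR : exclusionPOVM P t R j * R = (t j / (∑ k, t k - 1)) • (R - P j) := by
    simp [exclusionPOVM, add_mul, sub_mul, hPR, hR.isIdempotentElem.eq]
  rw [trace_mul_comm, hMR, trace_smul, trace_sub, trace_eq_sum_of_sum_smul_eq htr hsum, htr,
    RCLike.real_smul_eq_coe_mul]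
  exact_mod_cast div_mul_cancel₀ (t j) (by linarith)

end

theorem antidistinguishable_of_sum_smul_eq {d n : ℕ} {P : Fin n → Matrix (Fin d) (Fin d) ℂ}
    {t : Fin n → ℝ} {R : Matrix (Fin d) (Fin d) ℂ} (hP : ∀ i, IsStarProjection (P i))
    (ht : ∀ i, 0 < t i) (htr : ∀ i, (P i).trace = 1) (hR : IsStarProjection R)
    (hsum : ∑ i, t i • P i = R) (hs : 1 < ∑ k, t k) : Antidistinguishable P := by
  have hPR := mul_eq_self_of_sum_smul_eq hP ht hR hsum
  have hM := posSemidef_exclusionPOVM hP ht hR hPR hs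
  refine ⟨exclusionPOVM P t R, ⟨hM, sum_exclusionPOVM hsum hs⟩, fun j => ⟨?_, fun h => ?_⟩⟩
  · rw [mul_exclusionPOVM_self hP hPR, trace_zero]
  have hzero :=
    (Finset.sum_eq_zero_iff_of_nonneg fun k _ => (hP k).trace_mul_nonneg (hM j)).mp h
  have hRM : (R * exclusionPOVM P t R j).trace =
      ∑ k, t k • (P k * exclusionPOVM P t R j).trace := by
    simp [← hsum, Finset.sum_mul, trace_sum, trace_smul]
  rw [trace_mul_exclusionPOVM htr hR hsum hPR hs, Finset.sum_eq_zero fun k hk => by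
    rw [hzero k hk, smul_zero]] at hRM
  exact (ht j).ne' (RCLike.ofReal_eq_zero.mp hRM)

/-- if ∑ t_j P_j is an orthogonal projection for some positive reals
t_j, then the pairwise distinct pure states P_j (n ≥ 2) are antidistinguishable. -/
theorem antidistinguishable_of_sum_eq_projection {d n : ℕ} (hn : 2 ≤ n)
    (P : Fin n → Matrix (Fin d) (Fin d) ℂ) (hP : ∀ j, IsPureState (P j))
    (hinj : Function.Injective P) (t : Fin n → ℝ) (ht : ∀ j, 0 < t j)
    (R : Matrix (Fin d) (Fin d) ℂ) (hR : R.IsHermitian ∧ R * R = R)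
    (hsum : ∑ j, (t j : ℂ) • P j = R) :
    Antidistinguishable P := by
  have hPproj : ∀ j, IsStarProjection (P j) := fun j => ⟨(hP j).2.1, (hP j).1⟩
  have htr : ∀ j, (P j).trace = 1 := fun j => (hP j).2.2
  have hRproj : IsStarProjection R := ⟨hR.2, hR.1⟩
  have hsum' : ∑ j, t j • P j = R := by simpa only [Complex.coe_smul] using hsum
  have hs : 1 < ∑ k, t k := one_lt_sum_of_sum_smul_eq hPproj ht htr hRproj hsum'
    (i := ⟨0, by omega⟩) (j := ⟨1, hn⟩) (hinj.ne (by simp [Fin.ext_iff]))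
  exact antidistinguishable_of_sum_smul_eq hPproj ht htr hRproj hsum' hs
end

section
/- Let P₁,…,Pₙ be pairwise distinct pure states on ℂ^d with n ≥ 2, let t₁,…,tₙ be positive reals and R an orthogonal projection with ∑_{j=1}^n t_j P_j = R, and set r = tr R. Then the family M(j) = (t_j/(r−1))(R − P_j) + (1/n)(I − R), j = 1,…,n, is a POVM that antidistinguishes P₁,…,Pₙ: each M(j) is positive semidefinite, ∑_j M(j) = I, P_j M(j) = 0 for every j, and ∑_{k=1}^n tr(P_k M(j)) ≠ 0 for every j. -/
open Matrix BigOperators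
open scoped ComplexOrder

/-!
Since `0 ≤ t j P j ≤ R`, every `P j` lies under the projection `R`, so `R - P j` and `1 - R` are
projections and `M j` is positive semidefinite; moreover `P k M j = t j / (r - 1) (P k - P k P j)`.
For pure states `1 - tr (A B) = tr ((A - B)ᴴ (A - B)) / 2`, so `tr (P k P j) ≤ 1` with equality
only for `P k = P j`. Applied to `tr (P j R) = 1 = ∑ t k tr (P j P k)` this gives `r = ∑ t k > 1`,
and it makes `∑ k tr (P k M j)` positive.
-/

open scoped MatrixOrder Matrix.Norms.L2Operator

namespace Matrix

variable {m ι : Type*} [Fintype m] [DecidableEq m]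

/-- Each summand satisfies `0 ≤ c i • A i ≤ E`, and a positive element below a projection is
absorbed by it on both sides. -/
lemma mul_eq_self_of_sum_smul_eq_isStarProjection {s : Finset ι} {A : ι → Matrix m m ℂ}
    (hA : ∀ i ∈ s, (A i).PosSemidef) {c : ι → ℂ} (hc : ∀ i ∈ s, 0 < c i) {E : Matrix m m ℂ}
    (hE : IsStarProjection E) (hsum : ∑ i ∈ s, c i • A i = E) {i : ι} (hi : i ∈ s) :
    A i * E = A i ∧ E * A i = A i := by
  have hnonneg : ∀ j ∈ s, 0 ≤ c j • A j := fun j hj => ((hA j hj).smul (hc j hj).le).nonneg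
  have hle : c i • A i ≤ E := hsum ▸ Finset.single_le_sum hnonneg hi
  obtain ⟨hright, hleft⟩ := hE.mul_right_and_mul_left_of_nonneg_of_le (hnonneg i hi) hle
  rw [smul_mul_assoc, smul_right_inj (hc i hi).ne'] at hright
  rw [mul_smul_comm, smul_right_inj (hc i hi).ne'] at hleft
  exact ⟨hright, hleft⟩

end Matrix

namespace IsPureState

variable {d : ℕ} {A B : Matrix (Fin d) (Fin d) ℂ}

lemma isStarProjection (hA : IsPureState A) : IsStarProjection A := ⟨hA.2.1, hA.1⟩

lemma posSemidef (hA : IsPureState A) : A.PosSemidef := hA.isStarProjection.nonneg.posSemidef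

lemma one_sub_trace_mul (hA : IsPureState A) (hB : IsPureState B) :
    1 - (A * B).trace = (2 : ℂ)⁻¹ * ((A - B)ᴴ * (A - B)).trace := by
  have expand : (A - B)ᴴ * (A - B) = A * A + B * B - A * B - B * A := by
    rw [conjTranspose_sub, hA.1, hB.1]; noncomm_ring
  rw [expand, hA.2.1, hB.2.1, trace_sub, trace_sub, trace_add, hA.2.2, hB.2.2, trace_mul_comm B A]
  ring

/-- In `ComplexOrder` this also says that `tr (A B)` is real. -/
lemma trace_mul_le_one (hA : IsPureState A) (hB : IsPureState B) : (A * B).trace ≤ 1 := by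
  rw [← sub_nonneg, hA.one_sub_trace_mul hB]
  exact mul_nonneg (by positivity) (posSemidef_conjTranspose_mul_self (A - B)).trace_nonneg

lemma trace_mul_lt_one (hA : IsPureState A) (hB : IsPureState B) (hAB : A ≠ B) :
    (A * B).trace < 1 := by
  have hpsd := posSemidef_conjTranspose_mul_self (A - B)
  have hne : ((A - B)ᴴ * (A - B)).trace ≠ 0 := by
    rwa [Ne, hpsd.trace_eq_zero_iff, conjTranspose_mul_self_eq_zero, sub_eq_zero]
  rw [← sub_pos, hA.one_sub_trace_mul hB]
  exact mul_pos (by positivity) (lt_of_le_of_ne hpsd.trace_nonneg hne.symm)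

end IsPureState

lemma Finset.sum_smul_sub_eq_of_sum_smul_eq {ι R M : Type*} [Ring R] [AddCommGroup M] [Module R M]
    {s : Finset ι} {c : ι → R} {v : ι → M} {x : M} (h : ∑ i ∈ s, c i • v i = x) :
    ∑ i ∈ s, c i • (x - v i) = (∑ i ∈ s, c i - 1) • x := by
  simp_rw [smul_sub, Finset.sum_sub_distrib, h, ← Finset.sum_smul, sub_smul, one_smul]

section PureStateCombination

variable {ι : Type*} [Fintype ι] {d : ℕ} {P : ι → Matrix (Fin d) (Fin d) ℂ} {c : ι → ℂ}
  {R : Matrix (Fin d) (Fin d) ℂ}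

lemma trace_sum_smul_of_isPureState (hP : ∀ i, IsPureState (P i)) :
    (∑ i, c i • P i).trace = ∑ i, c i := by
  simp_rw [trace_sum, trace_smul, (hP _).2.2, smul_eq_mul, mul_one]

/-- `tr (P i R) = 1`, while each term of `R = ∑ c k P k` contributes `c k tr (P i P k) ≤ c k`,
strictly for `P k ≠ P i`. -/
lemma one_lt_trace_of_sum_smul_eq [Nontrivial ι] (hP : ∀ i, IsPureState (P i))
    (hinj : Function.Injective P) (hc : ∀ i, 0 < c i) (hR : IsStarProjection R)
    (hsum : ∑ i, c i • P i = R) : 1 < R.trace := by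
  obtain ⟨i, k, hik⟩ := exists_pair_ne ι
  have hPR := (Matrix.mul_eq_self_of_sum_smul_eq_isStarProjection (fun j _ => (hP j).posSemidef)
    (fun j _ => hc j) hR hsum (Finset.mem_univ i)).1
  have hexpand : R.trace - 1 = ∑ j, c j * (1 - (P i * P j).trace) := by
    have hone : ∑ j, c j * (P i * P j).trace = 1 := calc
      _ = (P i * R).trace := by
        simp_rw [← hsum, Matrix.mul_sum, trace_sum, mul_smul_comm, trace_smul, smul_eq_mul]
      _ = 1 := by rw [hPR, (hP i).2.2]
    simp_rw [mul_sub, mul_one, Finset.sum_sub_distrib, hone, ← hsum,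
      trace_sum_smul_of_isPureState hP]
  rw [← sub_pos, hexpand]
  refine Finset.sum_pos' (fun j _ => mul_nonneg (hc j).le
    (sub_nonneg.mpr ((hP i).trace_mul_le_one (hP j)))) ⟨k, Finset.mem_univ k, ?_⟩
  exact mul_pos (hc k)
    (sub_pos.mpr ((hP i).trace_mul_lt_one (hP k) (hinj.ne hik)))

end PureStateCombination

/-- explicit antidistinguishing POVM M(j) = (t_j/(r−1))(R − P_j) + (1/n)(I − R),
where r = tr R, for pure states with ∑ t_j P_j = R a projection. -/
theorem explicit_antidistinguishing_povm {d n : ℕ} (hn : 2 ≤ n)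
    (P : Fin n → Matrix (Fin d) (Fin d) ℂ) (hP : ∀ j, IsPureState (P j))
    (hinj : Function.Injective P) (t : Fin n → ℝ) (ht : ∀ j, 0 < t j)
    (R : Matrix (Fin d) (Fin d) ℂ) (hR : R.IsHermitian ∧ R * R = R)
    (hsum : ∑ j, (t j : ℂ) • P j = R)
    (r : ℂ) (hr : r = R.trace)
    (M : Fin n → Matrix (Fin d) (Fin d) ℂ)
    (hM : ∀ j, M j = ((t j : ℂ) / (r - 1)) • (R - P j) + ((n : ℂ)⁻¹) • (1 - R)) :
    IsPOVM M ∧ (∀ j, P j * M j = 0) ∧ ∀ j, ∑ k, (P k * M j).trace ≠ 0 := by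
  have hRproj : IsStarProjection R := ⟨hR.2, hR.1⟩
  have ht' : ∀ j, 0 < (t j : ℂ) := fun j => by exact_mod_cast ht j
  have hPR : ∀ j, P j * R = P j ∧ R * P j = P j := fun j =>
    Matrix.mul_eq_self_of_sum_smul_eq_isStarProjection (fun j _ => (hP j).posSemidef)
      (fun j _ => ht' j) hRproj hsum (Finset.mem_univ j)
  have : Nontrivial (Fin n) := Fin.nontrivial_iff_two_le.mpr hn
  have hr1 : 0 < r - 1 := hr ▸ sub_pos.mpr (one_lt_trace_of_sum_smul_eq hP hinj ht' hRproj hsum)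
  have hc : ∀ j, 0 < (t j : ℂ) / (r - 1) := fun j => div_pos (ht' j) hr1
  have hPM : ∀ j k, P k * M j = ((t j : ℂ) / (r - 1)) • (P k - P k * P j) := fun j k => by
    rw [hM, mul_add, mul_smul_comm, mul_smul_comm, mul_sub, mul_sub, mul_one, (hPR k).1, sub_self,
      smul_zero, add_zero]
  refine ⟨⟨fun j => ?_, ?_⟩, fun j => ?_, fun j => ?_⟩
  · rw [hM]
    exact (((hP j).isStarProjection.sub_of_mul_eq_left hRproj (hPR j).1).nonneg.posSemidef.smul
      (hc j).le).add (hRproj.one_sub.nonneg.posSemidef.smul (by positivity))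
  · have hcoef : ∑ j, ((t j : ℂ) / (r - 1)) • (R - P j) = R := by
      simp_rw [div_eq_inv_mul, ← smul_smul, ← Finset.smul_sum,
        Finset.sum_smul_sub_eq_of_sum_smul_eq hsum, ← trace_sum_smul_of_isPureState hP, hsum, ← hr,
        smul_smul, inv_mul_cancel₀ hr1.ne', one_smul]
    rw [Finset.sum_congr rfl fun j _ => hM j, Finset.sum_add_distrib, hcoef, Finset.sum_const,
      Finset.card_univ, Fintype.card_fin, ← Nat.cast_smul_eq_nsmul ℂ, smul_smul,
      mul_inv_cancel₀ (Nat.cast_ne_zero.mpr (by omega)), one_smul, add_sub_cancel]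
  · rw [hPM, (hP j).2.1, sub_self, smul_zero]
  · simp_rw [hPM, trace_smul, trace_sub, (hP _).2.2, smul_eq_mul, ← Finset.mul_sum]
    refine (mul_pos (hc j) (Finset.sum_pos'
      (fun k _ => sub_nonneg.mpr ((hP k).trace_mul_le_one (hP j))) ?_)).ne'
    obtain ⟨k, hk⟩ := exists_ne j
    exact ⟨k, Finset.mem_univ k, sub_pos.mpr ((hP k).trace_mul_lt_one (hP j) (hinj.ne hk))⟩
end
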